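/- If a Banach-space valued continuous process X is mean square almost periodic and Z is a (deterministic) limit in L² of X_{t_n} along some sequence t_n → ∞ with the properties that Z must simultaneously be almost surely constant and have E‖Z‖² ≥ c > 0 with E[Z] = 0, then a contradiction arises; hence no process can satisfy both the decorrelation property (Cov(⟨x*,X_s⟩,⟨x*,X_t⟩) → 0 as |t−s| → ∞) and a uniform lower variance bound inf_t Var(‖X_t‖) ≥ c > 0 while being mean square almost periodic. -/

import Mathlib

/-!
Bohr almost periodicity together with continuity makes the range of `X` totally bounded in
`L²(Ω; E)`, so some subsequence `X (φ n)` converges to a limit `Z`. Covariances are jointly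
continuous on `L²`, so for every `x* ∈ E*` the covariance of `⟨x*, X (φ n)⟩` and
`⟨x*, X (φ (2 n))⟩` tends to `Var ⟨x*, Z⟩`; it also tends to `0` by decorrelation, because
`φ (2 n) - φ n ≥ n`. Hence every `⟨x*, Z⟩` is a.s. constant, and by separability so is `Z`.
Then `Var ‖X (φ n)‖ → Var ‖Z‖ = 0`, contradicting `Var ‖X t‖ ≥ c > 0`.
-/

open MeasureTheory ProbabilityTheory Filter

noncomputable section

/-- Covariance of two real random variables. -/
def cov {Ω : Type*} [MeasurableSpace Ω] (P : Measure Ω) (X Y : Ω → ℝ) : ℝ :=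
  ∫ ω, (X ω - ∫ a, X a ∂P) * (Y ω - ∫ a, Y a ∂P) ∂P

/-- Bohr almost periodicity for a function into a (pseudo)metric space. -/
def BohrAlmostPeriodic {α : Type*} [PseudoMetricSpace α] (f : ℝ → α) : Prop :=
  ∀ ε > 0, ∃ l > 0, ∀ a : ℝ, ∃ τ ∈ Set.Icc a (a + l), ∀ t : ℝ,
    dist (f (t + τ)) (f t) ≤ ε

open Topology

theorem BohrAlmostPeriodic.totallyBounded_range {α : Type*} [PseudoMetricSpace α] {f : ℝ → α}
    (hf : BohrAlmostPeriodic f) (hcont : Continuous f) : TotallyBounded (Set.range f) := by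
  rw [Metric.totallyBounded_iff]
  intro ε hε
  obtain ⟨l, -, hτ⟩ := hf (ε / 2) (by positivity)
  -- every value `f t` is within `ε / 2` of a value on the compact window `[0, l]`
  obtain ⟨S, hSfin, hS⟩ := Metric.totallyBounded_iff.mp
    ((isCompact_Icc (a := (0 : ℝ)) (b := l)).image hcont).totallyBounded (ε / 2) (by positivity)
  refine ⟨S, hSfin, ?_⟩
  rintro _ ⟨t, rfl⟩
  obtain ⟨τ, ⟨hτa, hτb⟩, hdist⟩ := hτ (-t)
  obtain ⟨y, hy, hty⟩ := Set.mem_iUnion₂.mp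
    (hS ⟨t + τ, ⟨by linarith, by linarith⟩, rfl⟩)
  refine Set.mem_iUnion₂.mpr ⟨y, hy, ?_⟩
  rw [Metric.mem_ball] at hty ⊢
  linarith [dist_triangle_left (f t) y (f (t + τ)), hdist t]

theorem tendsto_zero_of_decorrelated {ι : Type*} {l : Filter ι} {f : ℝ → ℝ → ℝ}
    (hf : ∀ ε > (0 : ℝ), ∃ T : ℝ, ∀ s t : ℝ, T ≤ |t - s| → |f s t| ≤ ε)
    {s t : ι → ℝ} (hgap : Tendsto (fun i => |t i - s i|) l atTop) :
    Tendsto (fun i => f (s i) (t i)) l (𝓝 0) := by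
  rw [Metric.tendsto_nhds]
  intro ε hε
  obtain ⟨T, hT⟩ := hf (ε / 2) (by positivity)
  filter_upwards [hgap.eventually_ge_atTop T] with i hi
  rw [Real.dist_eq, sub_zero]
  linarith [hT _ _ hi]

section Covariance

variable {Ω : Type*} [MeasurableSpace Ω] {P : Measure Ω}

theorem cov_eq_covariance (X Y : Ω → ℝ) : cov P X Y = cov[X, Y; P] := rfl

theorem covariance_congr {X X' Y Y' : Ω → ℝ} (hX : X =ᵐ[P] X') (hY : Y =ᵐ[P] Y') :
    cov[X, Y; P] = cov[X', Y'; P] := by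
  simp only [covariance, integral_congr_ae hX, integral_congr_ae hY]
  refine integral_congr_ae ?_
  filter_upwards [hX, hY] with ω hXω hYω
  rw [hXω, hYω]

theorem ae_eq_integral_of_forall_variance_dual_eq_zero [IsFiniteMeasure P] {E : Type*}
    [NormedAddCommGroup E] [NormedSpace ℝ E] [CompleteSpace E] [SecondCountableTopology E]
    {Z : Ω → E} (hZ : MemLp Z 2 P)
    (h : ∀ L : StrongDual ℝ E, Var[fun ω => L (Z ω); P] = 0) :
    Z =ᵐ[P] fun _ => ∫ ω, Z ω ∂P := by
  have hdual (L : StrongDual ℝ E) : (fun ω => L (Z ω - ∫ ω, Z ω ∂P)) =ᵐ[P] 0 := by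
    filter_upwards [ae_eq_integral_of_variance_eq_zero (hZ.continuousLinearMap_comp L) (h L)]
      with ω hω
    rw [map_sub, hω, L.integral_comp_comm (hZ.integrable one_le_two), Pi.zero_apply, sub_self]
  filter_upwards [ae_eq_zero_of_forall_dual ℝ hdual] with ω hω
  exact sub_eq_zero.mp hω

variable [IsProbabilityMeasure P]

theorem integral_eq_inner_const_one (f : Lp ℝ 2 P) :
    ∫ ω, f ω ∂P = inner ℝ (Lp.const 2 P (1 : ℝ)) f := by
  rw [← indicatorConstLp_univ, L2.inner_indicatorConstLp_one, Measure.restrict_univ]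

theorem covariance_eq_inner_sub (f g : Lp ℝ 2 P) :
    cov[f, g; P] = inner ℝ f g - inner ℝ (Lp.const 2 P (1 : ℝ)) f *
      inner ℝ (Lp.const 2 P (1 : ℝ)) g := by
  rw [covariance_eq_sub (Lp.memLp f) (Lp.memLp g), ← integral_eq_inner_const_one,
    ← integral_eq_inner_const_one, L2.inner_def]
  congr 1
  refine integral_congr_ae (Eventually.of_forall fun ω => ?_)
  simp [mul_comm]

theorem continuous_covariance_Lp :
    Continuous fun fg : Lp ℝ 2 P × Lp ℝ 2 P => cov[fg.1, fg.2; P] := by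
  simp only [covariance_eq_inner_sub]
  fun_prop

variable {E : Type*} [NormedAddCommGroup E]

theorem Filter.Tendsto.covariance_comp_lipschitz {ι : Type*} {l : Filter ι} {g : E → ℝ}
    {K : NNReal} (hg : LipschitzWith K g) (g0 : g 0 = 0) {u v : ι → Lp E 2 P} {U V : Lp E 2 P}
    (hu : Tendsto u l (𝓝 U)) (hv : Tendsto v l (𝓝 V)) :
    Tendsto (fun i => cov[fun ω => g (u i ω), fun ω => g (v i ω); P]) l
      (𝓝 cov[fun ω => g (U ω), fun ω => g (V ω); P]) := by
  have hcomp (f : Lp E 2 P) : (fun ω => g (f ω)) =ᵐ[P] hg.compLp g0 f :=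
    (hg.coeFn_compLp g0 f).symm
  simp only [covariance_congr (hcomp _) (hcomp _)]
  have hcont := hg.continuous_compLp (p := 2) (μ := P) g0
  exact (continuous_covariance_Lp.tendsto _).comp
    (((hcont.tendsto U).comp hu).prodMk_nhds ((hcont.tendsto V).comp hv))

end Covariance

theorem stmt12_general {Ω : Type*} [MeasurableSpace Ω] (P : Measure Ω) [IsProbabilityMeasure P]
    {E : Type*} [NormedAddCommGroup E] [NormedSpace ℝ E] [CompleteSpace E]
    [SecondCountableTopology E]
    (X : ℝ → Lp E 2 P) (hXcont : Continuous X)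
    (hdecor : ∀ (xstar : E →L[ℝ] ℝ), ∀ ε > (0 : ℝ), ∃ T : ℝ, ∀ s t : ℝ, T ≤ |t - s| →
      |cov P (fun ω => xstar (X s ω)) (fun ω => xstar (X t ω))| ≤ ε)
    (c : ℝ) (hc : 0 < c)
    (hvar : ∀ t : ℝ, c ≤ variance (fun ω => ‖X t ω‖) P) :
    ¬ BohrAlmostPeriodic X := by
  intro hap
  simp only [cov_eq_covariance] at hdecor
  have hK := (hap.totallyBounded_range hXcont).closure.isCompact_of_isClosed isClosed_closure
  obtain ⟨Z, -, φ, hφ, hZ⟩ :=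
    hK.tendsto_subseq fun n : ℕ => subset_closure (Set.mem_range_self (n : ℝ))
  have hgap : Tendsto (fun n => |(φ (2 * n) : ℝ) - φ n|) atTop atTop := by
    refine tendsto_atTop_mono (fun n => le_abs.2 (.inl (le_sub_iff_add_le.2 ?_)))
      tendsto_natCast_atTop_atTop
    rw [two_mul]
    exact_mod_cast hφ.add_le_nat n n
  have hZ2 : Tendsto (fun n => X (φ (2 * n))) atTop (𝓝 Z) :=
    hZ.comp (tendsto_id.const_mul_atTop' two_pos)
  have hZconst := ae_eq_integral_of_forall_variance_dual_eq_zero (Lp.memLp Z) fun L => by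
    rw [← covariance_self ((Lp.memLp Z).continuousLinearMap_comp L).aemeasurable]
    exact tendsto_nhds_unique (hZ.covariance_comp_lipschitz L.lipschitz (map_zero L) hZ2)
      (tendsto_zero_of_decorrelated (hdecor L) hgap)
  have hnorm : Tendsto (fun n => Var[fun ω => ‖X (φ n) ω‖; P]) atTop (𝓝 0) := by
    have hZnorm : (fun ω => ‖Z ω‖) =ᵐ[P] fun _ => ‖∫ ω, Z ω ∂P‖ :=
      hZconst.fun_comp norm
    simp_rw [← covariance_self (Lp.memLp _).norm.aemeasurable]
    simpa [covariance_congr hZnorm hZnorm] using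
      hZ.covariance_comp_lipschitz lipschitzWith_one_norm norm_zero hZ
  exact hc.not_ge (ge_of_tendsto' hnorm fun n => hvar _)

/-- No continuous `L²`-process with uniformly integrable squared norms can
simultaneously satisfy the decorrelation property
(`Cov(⟨x*,X_s⟩, ⟨x*,X_t⟩) → 0` as `|t - s| → ∞`) and the uniform variance lower
bound `Var ‖X_t‖ ≥ c > 0` while being mean square almost periodic. -/
theorem stmt12 {Ω : Type*} [MeasurableSpace Ω] (P : Measure Ω) [IsProbabilityMeasure P]
    {E : Type*} [NormedAddCommGroup E] [NormedSpace ℝ E] [CompleteSpace E]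
    [SecondCountableTopology E] [MeasurableSpace E] [BorelSpace E]
    [Fact ((1 : ENNReal) ≤ 2)]
    (X : ℝ → Lp E 2 P) (hXcont : Continuous X)
    (hui : UnifIntegrable (fun t ω => ‖X t ω‖ ^ 2) 1 P)
    (hdecor : ∀ (xstar : E →L[ℝ] ℝ), ∀ ε > (0 : ℝ), ∃ T : ℝ, ∀ s t : ℝ, T ≤ |t - s| →
      |cov P (fun ω => xstar (X s ω)) (fun ω => xstar (X t ω))| ≤ ε)
    (c : ℝ) (hc : 0 < c)
    (hvar : ∀ t : ℝ, c ≤ variance (fun ω => ‖X t ω‖) P) :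
    ¬ BohrAlmostPeriodic X :=
  stmt12_general P X hXcont hdecor c hc hvar
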